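/- Let R be a commutative integral domain and h an entropy function of flows over R. Let β_R be the right Bernoulli shift on the countable direct sum R^(ℕ), given by (x₀, x₁, x₂, …) ↦ (0, x₀, x₁, …). If h(R^(ℕ), β_R) = 0, then h is identically zero, i.e. h(M,φ) = 0 for every flow (M,φ) over R. -/
import Mathlib


open DirectSum

/-- An invariant of algebraic flows over `R`: a function assigning to every left
`R`-module `M` and every `R`-linear endomorphism `φ` of `M` a value in `[0,∞]`. -/
abbrev FlowInvariant (R : Type) [Ring R] : Type 1 :=
  ∀ (M : Type) [AddCommGroup M] [Module R M], (M →ₗ[R] M) → ENNReal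

/-- The direct sum of a family of endomorphisms, acting componentwise on `⨁ j, M j`. -/
noncomputable def dsMap (R : Type) [Ring R] {J : Type} {M : J → Type}
    [∀ j, AddCommGroup (M j)] [∀ j, Module R (M j)]
    (φ : ∀ j, M j →ₗ[R] M j) : (⨁ j, M j) →ₗ[R] ⨁ j, M j :=
  letI := Classical.decEq J
  DirectSum.toModule R J (⨁ j, M j) fun j => (DirectSum.lof R J M j).comp (φ j)

/-- `h` is an entropy function of algebraic flows over `R`: (A1) it vanishes on zero
flows and is invariant under conjugation; (A2) for every `φ`-invariant submodule `N` of
`M`, `h (M,φ)` vanishes iff `h` vanishes on the restriction of `φ` to `N` and on the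
endomorphism induced by `φ` on `M ⧸ N`; (A3) `h` vanishes on a direct sum of flows iff
it vanishes on every summand. -/
def IsFlowEntropyFunction (R : Type) [Ring R] (h : FlowInvariant R) : Prop :=
  (∀ (M : Type) [AddCommGroup M] [Module R M] (φ : M →ₗ[R] M),
      Subsingleton M → h M φ = 0) ∧
  (∀ (M : Type) [AddCommGroup M] [Module R M] (N : Type) [AddCommGroup N] [Module R N]
      (φ : M →ₗ[R] M) (ψ : N →ₗ[R] N) (σ : M ≃ₗ[R] N),
      (∀ x : M, σ (φ x) = ψ (σ x)) → h M φ = h N ψ) ∧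
  (∀ (M : Type) [AddCommGroup M] [Module R M] (φ : M →ₗ[R] M) (N : Submodule R M)
      (hN : ∀ x ∈ N, φ x ∈ N),
      h M φ = 0 ↔
        h ↥N (φ.restrict hN) = 0 ∧
        h (M ⧸ N) (Submodule.mapQ N N φ (fun x hx => hN x hx)) = 0) ∧
  (∀ (J : Type) (M : J → Type) [∀ j, AddCommGroup (M j)] [∀ j, Module R (M j)]
      (φ : ∀ j, M j →ₗ[R] M j),
      h (⨁ j, M j) (dsMap R φ) = 0 ↔ ∀ j, h (M j) (φ j) = 0)

/-- Axiom (A0): `h` vanishes on every zero endomorphism and on every identity. -/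
def FlowA0 (R : Type) [Ring R] (h : FlowInvariant R) : Prop :=
  ∀ (M : Type) [AddCommGroup M] [Module R M],
    h M (0 : M →ₗ[R] M) = 0 ∧ h M (LinearMap.id : M →ₗ[R] M) = 0

/-- Axiom (A4*), the logarithmic law: `h (M, φ^n) = n * h (M, φ)` for every `n ≥ 1`. -/
def FlowA4Star (R : Type) [Ring R] (h : FlowInvariant R) : Prop :=
  ∀ (M : Type) [AddCommGroup M] [Module R M] (φ : M →ₗ[R] M) (n : ℕ), 1 ≤ n →
    h M (φ ^ n) = (n : ENNReal) * h M φ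

set_option maxHeartbeats 1000000 in
set_option maxSynthPendingDepth 3 in
/-- If `R` is an integral domain and `h` an entropy function of flows over `R` with
`h (R^{(ℕ)}, β_R) = 0`, where `β_R` is the right Bernoulli shift, then `h` is
identically zero. -/
theorem entropy_zero_of_bernoulli_zero (R : Type) [CommRing R] [IsDomain R]
    (h : FlowInvariant R) (H : IsFlowEntropyFunction R h)
    (hβ : h (ℕ →₀ R) (Finsupp.lmapDomain R R Nat.succ) = 0) :
    ∀ (M : Type) [AddCommGroup M] [Module R M] (φ : M →ₗ[R] M), h M φ = 0 := by
  intro M _ _ φ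
  obtain ⟨h0, hconj, hses, hsum⟩ := H
  classical
  -- The big direct sum of copies of the Bernoulli flow, indexed by M.
  set β : (ℕ →₀ R) →ₗ[R] (ℕ →₀ R) := Finsupp.lmapDomain R R Nat.succ with hβdef
  set Φ : (⨁ _ : M, (ℕ →₀ R)) →ₗ[R] ⨁ _ : M, (ℕ →₀ R) :=
    dsMap R (fun _ : M => β) with hΦdef
  have hB : h (⨁ _ : M, (ℕ →₀ R)) Φ = 0 :=
    (hsum M (fun _ => ℕ →₀ R) (fun _ => β)).mpr (fun _ => hβ)
  -- The evaluation map π : ⨁_{m : M} R^{(ℕ)} → M, e_{m,n} ↦ φ^n m.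
  set π : (⨁ _ : M, (ℕ →₀ R)) →ₗ[R] M :=
    DirectSum.toModule R M M (fun m => Finsupp.linearCombination R (fun n => (φ ^ n) m))
    with hπdef
  have hπlof : ∀ (m : M) (n : ℕ) (r : R),
      π (DirectSum.lof R M (fun _ => ℕ →₀ R) m (Finsupp.single n r)) = r • (φ ^ n) m := by
    intro m n r
    simp [hπdef, DirectSum.toModule_lof, Finsupp.linearCombination_single]
  have hcomm : ∀ b, π (Φ b) = φ (π b) := by
    have : π.comp Φ = φ.comp π := by
      refine DirectSum.linearMap_ext R fun m => ?_
      refine Finsupp.lhom_ext fun n r => ?_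
      have h1 : Φ (DirectSum.lof R M (fun _ => ℕ →₀ R) m (Finsupp.single n r)) =
          DirectSum.lof R M (fun _ => ℕ →₀ R) m (Finsupp.single (n + 1) r) := by
        simp [hΦdef, dsMap, DirectSum.toModule_lof, hβdef, Finsupp.lmapDomain_apply,
          Finsupp.mapDomain_single, Nat.succ_eq_add_one]
      simp only [LinearMap.comp_apply, h1, hπlof]
      rw [map_smul]
      congr 1
      rw [pow_succ', Module.End.mul_apply]
    intro b
    exact DFunLike.congr_fun this b
  have hsurj : Function.Surjective π := by
    intro m
    refine ⟨DirectSum.lof R M (fun _ => ℕ →₀ R) m (Finsupp.single 0 1), ?_⟩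
    simp [hπlof]
  -- The kernel of π is Φ-invariant.
  set K : Submodule R (⨁ _ : M, (ℕ →₀ R)) := LinearMap.ker π with hKdef
  have hN : ∀ x ∈ K, Φ x ∈ K := by
    intro x hx
    simp only [hKdef, LinearMap.mem_ker] at hx ⊢
    rw [hcomm, hx, map_zero]
  have hq := ((hses (⨁ _ : M, (ℕ →₀ R)) Φ K hN).mp hB).2
  -- The quotient flow is conjugate to (M, φ).
  set σ0 := Submodule.liftQ K π (le_of_eq hKdef) with hσ0def
  have hσ0inj : Function.Injective σ0 := by
    intro x y hxy
    obtain ⟨a, rfl⟩ := Submodule.Quotient.mk_surjective _ x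
    obtain ⟨b, rfl⟩ := Submodule.Quotient.mk_surjective _ y
    rw [Submodule.Quotient.eq]
    have hab : π a = π b := by simpa [hσ0def, Submodule.liftQ_apply] using hxy
    rw [hKdef, LinearMap.mem_ker, map_sub, hab, sub_self]
  have hσ0surj : Function.Surjective σ0 := by
    intro m
    obtain ⟨b, hb⟩ := hsurj m
    exact ⟨Submodule.Quotient.mk b, by simpa [hσ0def] using hb⟩
  set σ := LinearEquiv.ofBijective σ0 ⟨hσ0inj, hσ0surj⟩ with hσdef
  have key := hconj _ _ (Submodule.mapQ K K Φ
      (fun x hx => hN x hx)) φ σ ?_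
  · rw [← key, hq]
  · intro x
    obtain ⟨b, rfl⟩ := Submodule.Quotient.mk_surjective _ x
    have h1 : (Submodule.mapQ K K Φ
        (fun x hx => hN x hx)) (Submodule.Quotient.mk b) = Submodule.Quotient.mk (Φ b) :=
      Submodule.mapQ_apply _ _ _ b
    rw [h1]
    show σ0 (Submodule.Quotient.mk (Φ b)) = φ (σ0 (Submodule.Quotient.mk b))
    simp only [hσ0def, Submodule.liftQ_apply]
    exact hcomm b
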